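/- arXiv:1809.07344 — 4 statements merged into one kernel-verified Lean document; each statement's English description precedes it below -/
import Mathlib

section
/- For all natural numbers n and i with 0 ≤ i ≤ n and every real number t > 0, the improper integral ∫₀^∞ sⁱ/(1+s·t)^(n+2) ds converges and satisfies (n+1) · ∫₀^∞ sⁱ/(1+s·t)^(n+2) ds = 1/(binom(n,i) · t^(i+1)), where binom(n,i) is the binomial coefficient. -/
/-!
Write `I(i, m) = ∫₀^∞ sⁱ/(1+st)^(m+2) ds`. Integrating the derivative of
`s^(i+1)/(1+st)^(m+2)`, which vanishes at `0` and at `∞` when `i ≤ m`, gives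
`(m+2) t I(i+1, m+1) = (i+1) I(i, m)`. Starting from `(m+1) t I(0, m) = 1` and using
`(m+1) C(m,i) = C(m+1,i+1) (i+1)`, induction on `i` yields `(m+1) C(m,i) t^(i+1) I(i, m) = 1`.
-/

open MeasureTheory Set Filter Topology

section

variable {t : ℝ}

lemma hasDerivAt_pow_succ_div_one_add_mul_pow (i p : ℕ) {s : ℝ} (hs : 1 + s * t ≠ 0) :
    HasDerivAt (fun s : ℝ => s ^ (i + 1) / (1 + s * t) ^ (p + 1))
      ((i + 1) * (s ^ i / (1 + s * t) ^ (p + 1))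
        - (p + 1) * t * (s ^ (i + 1) / (1 + s * t) ^ (p + 2))) s := by
  refine ((hasDerivAt_pow (i + 1) s).fun_div
    ((((hasDerivAt_id' s).mul_const t).const_add 1).fun_pow (p + 1))
    (pow_ne_zero _ hs)).congr_deriv ?_
  simp only [Nat.add_sub_cancel]
  push_cast
  field_simp
  ring

lemma pow_div_one_add_mul_pow_le (ht : 0 < t) {s : ℝ} (hs : 0 ≤ s) {i p : ℕ} (hip : i ≤ p) :
    s ^ i / (1 + s * t) ^ p ≤ (t ^ i)⁻¹ * ((1 + s * t) ^ (p - i))⁻¹ := by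
  have hst : (s * t) ^ i ≤ (1 + s * t) ^ i := pow_le_pow_left₀ (by positivity) (by linarith) i
  rw [← Nat.add_sub_cancel' hip, pow_add, Nat.add_sub_cancel_left, div_le_iff₀ (by positivity)]
  calc s ^ i = (s * t) ^ i * (t ^ i)⁻¹ := by field_simp; ring
    _ ≤ (1 + s * t) ^ i * (t ^ i)⁻¹ := by gcongr
    _ = _ := by field_simp

lemma tendsto_inv_one_add_mul_pow_atTop (ht : 0 < t) {p : ℕ} (hp : p ≠ 0) :
    Tendsto (fun s : ℝ => ((1 + s * t) ^ p)⁻¹) atTop (𝓝 0) :=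
  tendsto_inv_atTop_zero.comp <| (tendsto_pow_atTop hp).comp <|
    tendsto_atTop_add_const_left _ 1 (tendsto_id.atTop_mul_const ht)

lemma tendsto_pow_div_one_add_mul_pow_atTop (ht : 0 < t) {i p : ℕ} (hip : i < p) :
    Tendsto (fun s : ℝ => s ^ i / (1 + s * t) ^ p) atTop (𝓝 0) := by
  have hbound :=
    (tendsto_inv_one_add_mul_pow_atTop ht (p := p - i) (by omega)).const_mul (t ^ i)⁻¹
  rw [mul_zero] at hbound
  refine tendsto_of_tendsto_of_tendsto_of_le_of_le' tendsto_const_nhds hbound ?_ ?_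
  all_goals filter_upwards [eventually_ge_atTop 0] with s hs
  · positivity
  · exact pow_div_one_add_mul_pow_le ht hs hip.le

lemma integral_Ioi_one_div_one_add_mul_pow (ht : 0 < t) (p : ℕ) :
    IntegrableOn (fun s : ℝ => 1 / (1 + s * t) ^ (p + 2)) (Ioi 0) ∧
      (p + 1) * t * ∫ s in Ioi (0 : ℝ), 1 / (1 + s * t) ^ (p + 2) = 1 := by
  have hderiv : ∀ s ∈ Ici (0 : ℝ), HasDerivAt (fun s : ℝ => -((1 + s * t) ^ (p + 1))⁻¹)
      ((p + 1) * t * (1 / (1 + s * t) ^ (p + 2))) s := by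
    intro s (hs : 0 ≤ s)
    refine (((((hasDerivAt_id' s).mul_const t).const_add 1).fun_pow (p + 1)).fun_inv
      (by positivity)).fun_neg.congr_deriv ?_
    simp only [Nat.add_sub_cancel]
    push_cast
    field_simp
    ring
  have hnonneg : ∀ s ∈ Ioi (0 : ℝ), 0 ≤ (p + 1) * t * (1 / (1 + s * t) ^ (p + 2)) := by
    intro s (hs : 0 < s)
    positivity
  have hlim := (tendsto_inv_one_add_mul_pow_atTop ht (p := p + 1) (by omega)).neg
  rw [neg_zero] at hlim
  have hc : IsUnit ((p + 1 : ℝ) * t) := (by positivity : (p + 1 : ℝ) * t ≠ 0).isUnit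
  refine ⟨(integrable_const_mul_iff hc _).1
    (integrableOn_Ioi_deriv_of_nonneg' hderiv hnonneg hlim), ?_⟩
  rw [← integral_const_mul, integral_Ioi_of_hasDerivAt_of_nonneg' hderiv hnonneg hlim]
  simp

lemma integrableOn_pow_div_one_add_mul_pow (ht : 0 < t) {i m : ℕ} (him : i ≤ m) :
    IntegrableOn (fun s : ℝ => s ^ i / (1 + s * t) ^ (m + 2)) (Ioi 0) := by
  refine ((integral_Ioi_one_div_one_add_mul_pow ht (m - i)).1.const_mul (t ^ i)⁻¹).mono'
    (by fun_prop : Measurable fun s : ℝ => s ^ i / (1 + s * t) ^ (m + 2)).aestronglyMeasurable ?_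
  filter_upwards [ae_restrict_mem measurableSet_Ioi] with s (hs : 0 < s)
  rw [Real.norm_of_nonneg (by positivity), one_div, show m - i + 2 = m + 2 - i by omega]
  exact pow_div_one_add_mul_pow_le ht hs.le (by omega)

lemma integral_Ioi_pow_succ_div_one_add_mul_pow (ht : 0 < t) {i m : ℕ} (him : i ≤ m) :
    (m + 2) * t * ∫ s in Ioi (0 : ℝ), s ^ (i + 1) / (1 + s * t) ^ (m + 3) =
      (i + 1) * ∫ s in Ioi (0 : ℝ), s ^ i / (1 + s * t) ^ (m + 2) := by
  have hderiv : ∀ s ∈ Ici (0 : ℝ),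
      HasDerivAt (fun s : ℝ => s ^ (i + 1) / (1 + s * t) ^ (m + 2))
        ((i + 1) * (s ^ i / (1 + s * t) ^ (m + 2))
          - (m + 2) * t * (s ^ (i + 1) / (1 + s * t) ^ (m + 3))) s := by
    intro s (hs : 0 ≤ s)
    simpa [add_assoc, one_add_one_eq_two] using
      hasDerivAt_pow_succ_div_one_add_mul_pow i (m + 1) (by positivity : 1 + s * t ≠ 0)
  have hA := (integrableOn_pow_div_one_add_mul_pow ht him).const_mul (i + 1 : ℝ)
  have hB := (integrableOn_pow_div_one_add_mul_pow ht (Nat.succ_le_succ him)).const_mul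
    ((m + 2 : ℝ) * t)
  have hftc := integral_Ioi_of_hasDerivAt_of_tendsto' hderiv (hA.sub hB)
    (tendsto_pow_div_one_add_mul_pow_atTop ht (by omega))
  rw [integral_sub hA hB, integral_const_mul, integral_const_mul] at hftc
  simp only [ne_eq, Nat.add_eq_zero_iff, one_ne_zero, and_false, not_false_eq_true, zero_pow,
    zero_div, sub_zero] at hftc
  linarith

theorem integral_Ioi_pow_div_one_add_mul_pow (ht : 0 < t) {i m : ℕ} (him : i ≤ m) :
    (m + 1) * m.choose i * t ^ (i + 1) *
      ∫ s in Ioi (0 : ℝ), s ^ i / (1 + s * t) ^ (m + 2) = 1 := by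
  induction i generalizing m with
  | zero => simpa [mul_right_comm] using (integral_Ioi_one_div_one_add_mul_pow ht m).2
  | succ i ih =>
    obtain ⟨m, rfl⟩ : ∃ m', m = m' + 1 := ⟨m - 1, by omega⟩
    have hm : i ≤ m := by omega
    have hchoose : (m + 1 : ℝ) * m.choose i = (m + 1).choose (i + 1) * (i + 1) := by
      exact_mod_cast Nat.add_one_mul_choose_eq m i
    calc _ = (m + 1).choose (i + 1) * t ^ (i + 1) *
          ((m + 2) * t * ∫ s in Ioi (0 : ℝ), s ^ (i + 1) / (1 + s * t) ^ (m + 3)) := by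
          push_cast; ring
      _ = (m + 1) * m.choose i * t ^ (i + 1) *
          ∫ s in Ioi (0 : ℝ), s ^ i / (1 + s * t) ^ (m + 2) := by
          rw [integral_Ioi_pow_succ_div_one_add_mul_pow ht hm]
          linear_combination
            (t ^ (i + 1) * ∫ s in Ioi (0 : ℝ), s ^ i / (1 + s * t) ^ (m + 2)) * hchoose.symm
      _ = 1 := ih hm

end

/-- For all natural numbers `n`, `i` with `i ≤ n` and every real `t > 0`,
the improper integral `∫₀^∞ sⁱ/(1+s·t)^(n+2) ds` converges and
`(n+1) · ∫₀^∞ sⁱ/(1+s·t)^(n+2) ds = 1/(binom(n,i) · t^(i+1))`. -/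
theorem beta_integral_formula (n i : ℕ) (hi : i ≤ n) (t : ℝ) (ht : 0 < t) :
    IntegrableOn (fun s : ℝ => s ^ i / (1 + s * t) ^ (n + 2)) (Ici 0) volume ∧
    (n + 1 : ℝ) * ∫ s in Ici (0 : ℝ), s ^ i / (1 + s * t) ^ (n + 2) =
      1 / ((n.choose i : ℝ) * t ^ (i + 1)) := by
  refine ⟨(integrableOn_Ici_iff_integrableOn_Ioi).2 (integrableOn_pow_div_one_add_mul_pow ht hi),
    ?_⟩
  have hchoose : (0 : ℝ) < n.choose i := by exact_mod_cast Nat.choose_pos hi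
  rw [integral_Ici_eq_integral_Ioi, eq_div_iff (by positivity)]
  linear_combination integral_Ioi_pow_div_one_add_mul_pow ht hi
end

section
/- Let n be a natural number, d ≥ 0 and M ≥ 0 real numbers, and c₀,…,cₙ real numbers. Let W : [0,∞) → ℝ be a measurable function such that |W(s)| ≤ M for all s ∈ [0,d] and W(s) = Σ_{i=0}^n binom(n,i)·c_{n−i}·sⁱ for all s > d. Then there exists a constant C such that for all t ∈ (0,1], |(n+1)·∫₀^∞ W(s)·t^(n+1)/(1+s·t)^(n+2) ds − Σ_{j=0}^n c_j·t^j| ≤ C·t^(n+1); that is, the difference is O(t^(n+1)) as t → 0⁺. -/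
/-!
Write `p s = ∑ i ≤ n, (n choose i) c (n - i) sⁱ`. After the substitution `u = s t`, the Beta
integrals `∫₀^∞ uⁱ / (1 + u)^(i + k + 2) du = i! k! / (i + k + 1)!` show that
`(n + 1) ∫₀^∞ p(s) tⁿ⁺¹ / (1 + s t)ⁿ⁺² ds = ∑ j ≤ n, c j tʲ` exactly. The remainder `W - p`
vanishes beyond `d` and is bounded on `[0, d]`, where the kernel `tⁿ⁺¹ / (1 + s t)ⁿ⁺²` is at
most `tⁿ⁺¹`; so it contributes at most `(n + 1) (M + sup |p|) d tⁿ⁺¹`.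
-/

open MeasureTheory Set Finset Filter Topology
open scoped Nat

lemma pow_div_one_add_pow_le_inv {u : ℝ} (hu : 0 ≤ u) {p q : ℕ} (h : p ≤ q) :
    u ^ p / (1 + u) ^ q ≤ ((1 + u) ^ (q - p))⁻¹ := by
  have h1 : 0 < 1 + u := by linarith
  rw [div_le_iff₀ (by positivity), ← Nat.add_sub_of_le h, pow_add, Nat.add_sub_cancel_left,
    mul_comm ((1 + u) ^ p), inv_mul_cancel_left₀ (by positivity)]
  gcongr
  linarith

lemma integrableOn_pow_div_one_add_pow {p q : ℕ} (h : p + 2 ≤ q) :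
    IntegrableOn (fun u : ℝ => u ^ p / (1 + u) ^ q) (Ioi 0) := by
  have hdim : (Module.finrank ℝ ℝ : ℝ) < ((q - p : ℕ) : ℝ) := by
    rw [Module.finrank_self, Nat.cast_one, Nat.one_lt_cast]; omega
  have hmeas : Measurable (fun u : ℝ => u ^ p / (1 + u) ^ q) := by fun_prop
  refine (integrable_one_add_norm hdim).integrableOn.mono' hmeas.aestronglyMeasurable ?_
  rw [ae_restrict_iff' measurableSet_Ioi]
  filter_upwards with u (hu : 0 < u)
  rw [Real.norm_of_nonneg (by positivity), Real.norm_of_nonneg hu.le, Real.rpow_neg (by positivity),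
    Real.rpow_natCast]
  exact pow_div_one_add_pow_le_inv hu.le (by omega)

lemma hasDerivAt_pow_div_one_add_pow (p q : ℕ) {x : ℝ} (hx : 0 < 1 + x) :
    HasDerivAt (fun u : ℝ => u ^ p / (1 + u) ^ q)
      (p * x ^ (p - 1) / (1 + x) ^ q - q * x ^ p / (1 + x) ^ (q + 1)) x := by
  refine ((hasDerivAt_pow p x).fun_div (((hasDerivAt_id' x).const_add 1).fun_pow q)
    (by positivity)).congr_deriv ?_
  rcases q with _ | q
  · simp
  · rw [Nat.add_sub_cancel]
    field_simp
    ring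

lemma tendsto_pow_div_one_add_pow_atTop {p q : ℕ} (h : p < q) :
    Tendsto (fun u : ℝ => u ^ p / (1 + u) ^ q) atTop (𝓝 0) := by
  have hlim : Tendsto (fun u : ℝ => ((1 + u) ^ (q - p))⁻¹) atTop (𝓝 0) :=
    ((tendsto_pow_atTop (by omega)).comp
      (tendsto_atTop_add_const_left _ 1 tendsto_id)).inv_tendsto_atTop
  refine squeeze_zero' ?_ ?_ hlim <;> filter_upwards [eventually_ge_atTop 0] with u hu
  · positivity
  · exact pow_div_one_add_pow_le_inv hu h.le

theorem integral_pow_div_one_add_pow (i k : ℕ) :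
    ∫ u in Ioi (0 : ℝ), u ^ i / (1 + u) ^ (i + k + 2) = i ! * k ! / (i + k + 1)! := by
  have hpos : ∀ x ∈ Ici (0 : ℝ), 0 < 1 + x := fun x hx => by linarith [mem_Ici.mp hx]
  induction i with
  | zero =>
    have hderiv : ∀ x ∈ Ici (0 : ℝ),
        HasDerivAt (fun u => -(k + 1 : ℝ)⁻¹ * (u ^ 0 / (1 + u) ^ (k + 1)))
          (x ^ 0 / (1 + x) ^ (0 + k + 2)) x := fun x hx =>
      ((hasDerivAt_pow_div_one_add_pow 0 (k + 1) (hpos x hx)).const_mul _).congr_deriv <| by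
        push_cast
        field_simp
        ring
    have hlim := (tendsto_pow_div_one_add_pow_atTop (p := 0) (q := k + 1) (by omega)).const_mul
      (-(k + 1 : ℝ)⁻¹)
    rw [mul_zero] at hlim
    rw [integral_Ioi_of_hasDerivAt_of_tendsto' hderiv (integrableOn_pow_div_one_add_pow (by omega))
      hlim]
    simp [Nat.factorial_succ, field]
  | succ i ih =>
    -- `u ^ (i + 1) / (1 + u) ^ (i + k + 2)` vanishes at `0` and at `∞`, so its derivative
    -- integrates to zero; this relates the integral for `i + 1` to the one for `i`.
    have hderiv : ∀ x ∈ Ici (0 : ℝ),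
        HasDerivAt (fun u => -(i + k + 2 : ℝ)⁻¹ * (u ^ (i + 1) / (1 + u) ^ (i + k + 2)))
          (x ^ (i + 1) / (1 + x) ^ (i + 1 + k + 2)
            - (i + 1) / (i + k + 2) * (x ^ i / (1 + x) ^ (i + k + 2))) x := fun x hx =>
      ((hasDerivAt_pow_div_one_add_pow (i + 1) (i + k + 2) (hpos x hx)).const_mul
        _).congr_deriv <| by
        push_cast
        field_simp
        ring
    have hint₁ := integrableOn_pow_div_one_add_pow (p := i + 1) (q := i + 1 + k + 2) (by omega)
    have hint₂ := integrableOn_pow_div_one_add_pow (p := i) (q := i + k + 2) (by omega)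
    have hlim := (tendsto_pow_div_one_add_pow_atTop (p := i + 1) (q := i + k + 2)
      (by omega)).const_mul (-(i + k + 2 : ℝ)⁻¹)
    rw [mul_zero] at hlim
    have hrec := integral_Ioi_of_hasDerivAt_of_tendsto' hderiv (hint₁.sub (hint₂.const_mul _)) hlim
    rw [integral_sub hint₁ (hint₂.const_mul _), integral_const_mul, ih] at hrec
    simp only [ne_eq, Nat.add_eq_zero_iff, one_ne_zero, and_false, not_false_eq_true, zero_pow,
      add_zero, one_pow, div_one, mul_zero, sub_self] at hrec
    rw [sub_eq_zero.mp hrec, show i + 1 + k + 1 = i + k + 1 + 1 by ring, Nat.factorial_succ i,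
      Nat.factorial_succ (i + k + 1)]
    push_cast
    field_simp
    ring

lemma pow_mul_kernel_eq (i k : ℕ) (s t : ℝ) :
    s ^ i * t ^ (i + k + 1) / (1 + s * t) ^ (i + k + 2) =
      t ^ (k + 1) * ((s * t) ^ i / (1 + s * t) ^ (i + k + 2)) := by
  ring

lemma integrableOn_pow_mul_kernel {i n : ℕ} (hi : i ≤ n) {t : ℝ} (ht : 0 < t) :
    IntegrableOn (fun s : ℝ => s ^ i * t ^ (n + 1) / (1 + s * t) ^ (n + 2)) (Ioi 0) := by
  obtain ⟨k, rfl⟩ := Nat.exists_eq_add_of_le hi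
  simp_rw [pow_mul_kernel_eq]
  refine Integrable.const_mul ?_ _
  exact (integrableOn_Ioi_comp_mul_right_iff (fun u => u ^ i / (1 + u) ^ (i + k + 2)) 0 ht).2
    (by simpa using integrableOn_pow_div_one_add_pow (by omega))

lemma integral_pow_mul_kernel {i n : ℕ} (hi : i ≤ n) {t : ℝ} (ht : 0 < t) :
    ∫ s in Ioi (0 : ℝ), s ^ i * t ^ (n + 1) / (1 + s * t) ^ (n + 2) =
      i ! * (n - i)! / (n + 1)! * t ^ (n - i) := by
  obtain ⟨k, rfl⟩ := Nat.exists_eq_add_of_le hi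
  simp_rw [pow_mul_kernel_eq]
  rw [integral_const_mul,
    integral_comp_mul_right_Ioi (fun u => u ^ i / (1 + u) ^ (i + k + 2)) 0 ht, zero_mul,
    integral_pow_div_one_add_pow, smul_eq_mul, Nat.add_sub_cancel_left, pow_succ]
  field_simp

lemma sum_mul_kernel_eq (n : ℕ) (a : ℕ → ℝ) (s t : ℝ) :
    (∑ i ∈ range (n + 1), a i * s ^ i) * t ^ (n + 1) / (1 + s * t) ^ (n + 2) =
      ∑ i ∈ range (n + 1), a i * (s ^ i * t ^ (n + 1) / (1 + s * t) ^ (n + 2)) := by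
  simp only [Finset.sum_mul, Finset.sum_div, mul_assoc, mul_div_assoc]

lemma integrableOn_sum_mul_kernel (n : ℕ) (a : ℕ → ℝ) {t : ℝ} (ht : 0 < t) :
    IntegrableOn
      (fun s : ℝ => (∑ i ∈ range (n + 1), a i * s ^ i) * t ^ (n + 1) / (1 + s * t) ^ (n + 2))
      (Ioi 0) := by
  simp_rw [sum_mul_kernel_eq]
  exact integrable_finsetSum _ fun i hi =>
    (integrableOn_pow_mul_kernel (Nat.lt_succ_iff.mp (mem_range.mp hi)) ht).const_mul _

lemma integral_sum_mul_kernel (n : ℕ) (a : ℕ → ℝ) {t : ℝ} (ht : 0 < t) :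
    ∫ s in Ioi (0 : ℝ),
        (∑ i ∈ range (n + 1), a i * s ^ i) * t ^ (n + 1) / (1 + s * t) ^ (n + 2) =
      ∑ i ∈ range (n + 1), a i * (i ! * (n - i)! / (n + 1)! * t ^ (n - i)) := by
  simp_rw [sum_mul_kernel_eq]
  have hle : ∀ i ∈ range (n + 1), i ≤ n := fun i hi => Nat.lt_succ_iff.mp (mem_range.mp hi)
  rw [integral_finsetSum _ fun i hi => (integrableOn_pow_mul_kernel (hle i hi) ht).const_mul _]
  exact sum_congr rfl fun i hi => by rw [integral_const_mul, integral_pow_mul_kernel (hle i hi) ht]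

lemma integral_binomial_sum_mul_kernel (n : ℕ) (c : ℕ → ℝ) {t : ℝ} (ht : 0 < t) :
    (n + 1 : ℝ) * ∫ s in Ioi (0 : ℝ),
        (∑ i ∈ range (n + 1), (n.choose i : ℝ) * c (n - i) * s ^ i) * t ^ (n + 1) /
          (1 + s * t) ^ (n + 2) =
      ∑ j ∈ range (n + 1), c j * t ^ j := by
  rw [integral_sum_mul_kernel n _ ht, mul_sum, ← sum_range_reflect (fun j => c j * t ^ j)]
  refine sum_congr rfl fun i hi => ?_
  have hfact : (n.choose i : ℝ) * i ! * (n - i)! = n ! := by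
    exact_mod_cast Nat.choose_mul_factorial_mul_factorial (Nat.lt_succ_iff.mp (mem_range.mp hi))
  rw [Nat.add_sub_cancel, Nat.factorial_succ]
  push_cast
  field_simp
  linear_combination c (n - i) * hfact

section Remainder

variable {E : Type*} [NormedAddCommGroup E] {f : ℝ → E} {a d K : ℝ}

lemma integrableOn_Ioi_of_norm_le_of_eq_zero (hf : AEStronglyMeasurable f)
    (hbdd : ∀ s ∈ Ioc a d, ‖f s‖ ≤ K) (hzero : ∀ s, d < s → f s = 0) :
    IntegrableOn f (Ioi a) := by
  have hIoc : IntegrableOn f (Ioc a d) := Measure.integrableOn_of_bounded (M := K)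
    measure_Ioc_lt_top.ne hf ((ae_restrict_iff' measurableSet_Ioc).2 (.of_forall hbdd))
  have hIoi : IntegrableOn f (Ioi d) :=
    integrableOn_zero.congr_fun (fun s hs => (hzero s hs).symm) measurableSet_Ioi
  exact (hIoc.union hIoi).mono_set Ioi_subset_Ioc_union_Ioi

lemma norm_setIntegral_Ioi_le_of_norm_le_of_eq_zero [NormedSpace ℝ E] (had : a ≤ d)
    (hbdd : ∀ s ∈ Ioc a d, ‖f s‖ ≤ K) (hzero : ∀ s, d < s → f s = 0) :
    ‖∫ s in Ioi a, f s‖ ≤ K * (d - a) := by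
  rw [setIntegral_eq_of_subset_of_forall_sdiff_eq_zero measurableSet_Ioi Ioc_subset_Ioi_self
    fun s hs => hzero s (not_le.mp fun h => hs.2 ⟨hs.1, h⟩)]
  simpa [Real.volume_real_Ioc, had] using
    norm_setIntegral_le_of_norm_le_const (μ := volume) measure_Ioc_lt_top hbdd

end Remainder

lemma norm_mul_pow_div_one_add_mul_pow_le (x : ℝ) {s t : ℝ} (hs : 0 ≤ s) (ht : 0 ≤ t)
    (m k : ℕ) :
    ‖x * t ^ m / (1 + s * t) ^ k‖ ≤ ‖x‖ * t ^ m := by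
  have h1 : 1 ≤ 1 + s * t := le_add_of_nonneg_right (mul_nonneg hs ht)
  rw [norm_div, norm_mul, norm_pow, norm_pow, Real.norm_of_nonneg ht,
    Real.norm_of_nonneg (zero_le_one.trans h1)]
  exact div_le_self (mul_nonneg (norm_nonneg x) (pow_nonneg ht m)) (one_le_pow₀ h1)

theorem integral_asymptotic_expansion_general (n : ℕ) (d M : ℝ) (hd : 0 ≤ d)
    (c : ℕ → ℝ) (W : ℝ → ℝ) (hW : Measurable W)
    (hWbdd : ∀ s ∈ Icc (0 : ℝ) d, |W s| ≤ M)
    (hWpoly : ∀ s : ℝ, d < s →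
      W s = ∑ i ∈ range (n + 1), (n.choose i : ℝ) * c (n - i) * s ^ i) :
    ∃ C : ℝ, ∀ t ∈ Ioc (0 : ℝ) 1,
      |(n + 1 : ℝ) * (∫ s in Ici (0 : ℝ), W s * t ^ (n + 1) / (1 + s * t) ^ (n + 2)) -
          ∑ j ∈ range (n + 1), c j * t ^ j| ≤ C * t ^ (n + 1) := by
  set p : ℝ → ℝ := fun s => ∑ i ∈ range (n + 1), (n.choose i : ℝ) * c (n - i) * s ^ i
  obtain ⟨B, hB⟩ := isCompact_Icc.exists_bound_of_continuousOn
    (f := p) (s := Icc 0 d) (by fun_prop)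
  refine ⟨(n + 1) * ((M + B) * d), fun t ⟨ht, _⟩ => ?_⟩
  set r : ℝ → ℝ := fun s => (W s - p s) * t ^ (n + 1) / (1 + s * t) ^ (n + 2)
  have hr_bdd : ∀ s ∈ Ioc 0 d, ‖r s‖ ≤ (M + B) * t ^ (n + 1) := fun s hs => by
    have hs' := Ioc_subset_Icc_self hs
    refine (norm_mul_pow_div_one_add_mul_pow_le _ hs.1.le ht.le _ _).trans ?_
    gcongr
    exact (norm_sub_le _ _).trans (add_le_add (hWbdd s hs') (hB s hs'))
  have hr_zero : ∀ s, d < s → r s = 0 := fun s hs => by simp [r, p, hWpoly s hs]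
  have hr_int : IntegrableOn r (Ioi 0) :=
    integrableOn_Ioi_of_norm_le_of_eq_zero (by fun_prop) hr_bdd hr_zero
  have hsplit : ∫ s in Ioi 0, W s * t ^ (n + 1) / (1 + s * t) ^ (n + 2) =
      (∫ s in Ioi 0, r s) + ∫ s in Ioi 0, p s * t ^ (n + 1) / (1 + s * t) ^ (n + 2) := by
    rw [← integral_add hr_int (integrableOn_sum_mul_kernel n _ ht)]
    congr 1 with s
    ring
  rw [integral_Ici_eq_integral_Ioi, hsplit, mul_add, integral_binomial_sum_mul_kernel n c ht,
    add_sub_cancel_right, abs_mul, abs_of_nonneg (by positivity), mul_assoc, mul_right_comm _ d]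
  gcongr
  simpa using norm_setIntegral_Ioi_le_of_norm_le_of_eq_zero hd hr_bdd hr_zero

/-- If `W` is measurable, `|W s| ≤ M` on `[0,d]` and
`W s = Σ_{i=0}^n binom(n,i)·c_{n−i}·sⁱ` for `s > d`, then
`(n+1)·∫₀^∞ W(s)·t^(n+1)/(1+s·t)^(n+2) ds − Σ_{j=0}^n c_j·t^j` is `O(t^(n+1))`
as `t → 0⁺`, in the explicit sense that it is bounded by `C·t^(n+1)` on `(0,1]`. -/
theorem integral_asymptotic_expansion (n : ℕ) (d M : ℝ) (hd : 0 ≤ d) (hM : 0 ≤ M)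
    (c : ℕ → ℝ) (W : ℝ → ℝ) (hW : Measurable W)
    (hWbdd : ∀ s ∈ Icc (0 : ℝ) d, |W s| ≤ M)
    (hWpoly : ∀ s : ℝ, d < s →
      W s = ∑ i ∈ range (n + 1), (n.choose i : ℝ) * c (n - i) * s ^ i) :
    ∃ C : ℝ, ∀ t ∈ Ioc (0 : ℝ) 1,
      |(n + 1 : ℝ) * (∫ s in Ici (0 : ℝ), W s * t ^ (n + 1) / (1 + s * t) ^ (n + 2)) -
          ∑ j ∈ range (n + 1), c j * t ^ j| ≤ C * t ^ (n + 1) :=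
  integral_asymptotic_expansion_general n d M hd c W hW hWbdd hWpoly
end

section
/- Let I ⊆ ℂ[x₀,…,xₙ] be a homogeneous ideal generated by homogeneous polynomials of degree at most d. Then for all integers a ≥ 1, b ≥ d·a, and c ≥ 1, the c-fold subspace power of the degree-b component of I^a equals the degree-(b·c) component of I^(a·c): ((I^a)_b)^c = (I^(a·c))_(b·c). -/
/-!
Write `I = (S)` with `S` homogeneous of degrees `≤ d`. Taking the degree-`N` part of a
representation `f = ∑ cₚ p`, `p ∈ Sᵐ`, shows that for `N ≥ d m` the degree-`N` part of `Iᵐ` is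
spanned by products `p q`, `p ∈ Sᵐ`, `q` homogeneous of the complementary degree. For `m = a + a'`
and `N = b + b'` with `b ≥ d a`, `b' ≥ d a'`, split `p = p₁ p₂` with `p₁ ∈ Sᵃ`, `p₂ ∈ Sᵃ'`, and `q`
as a sum of products `q₁ q₂` of forms of degrees `b - deg p₁` and `b' - deg p₂` (forms of degree
`s + t` are spanned by monomials, which factor). Each `p₁ q₁ · p₂ q₂` then lies in
`(Iᵃ)_b · (Iᵃ')_b'`, so `(Iᵃ)_b · (Iᵃ')_b' = (Iᵃ⁺ᵃ')_(b+b')`, and the theorem follows by induction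
on `c`.
-/

open MvPolynomial

/-- The degree-`s` homogeneous component of an ideal `I ⊆ ℂ[x₀,…,xₙ]`,
as a `ℂ`-subspace of the polynomial ring. -/
noncomputable def idealComponent {n : ℕ} (I : Ideal (MvPolynomial (Fin (n + 1)) ℂ)) (s : ℕ) :
    Submodule ℂ (MvPolynomial (Fin (n + 1)) ℂ) :=
  I.restrictScalars ℂ ⊓ homogeneousSubmodule (Fin (n + 1)) ℂ s

open Pointwise

namespace MvPolynomial

variable {σ R : Type*} [CommSemiring R]

attribute [local instance] gradedAlgebra in
theorem homogeneousComponent_mul_of_isHomogeneous (r : MvPolynomial σ R)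
    {p : MvPolynomial σ R} {e N : ℕ} (hp : p.IsHomogeneous e) (he : e ≤ N) :
    homogeneousComponent N (r * p) = homogeneousComponent (N - e) r * p := by
  simp only [← decomposition.decompose'_apply]
  exact DirectSum.coe_decompose_mul_of_right_mem_of_le (homogeneousSubmodule σ R) hp he

theorem homogeneousSubmodule_add (s t : ℕ) :
    homogeneousSubmodule σ R (s + t) = homogeneousSubmodule σ R s * homogeneousSubmodule σ R t := by
  rw [← homogeneousSubmodule_one_pow R (s + t), pow_add, homogeneousSubmodule_one_pow,
    homogeneousSubmodule_one_pow]

theorem exists_isHomogeneous_of_mem_pow {S : Set (MvPolynomial σ R)} {d : ℕ}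
    (hS : ∀ p ∈ S, ∃ e ≤ d, p.IsHomogeneous e) (m : ℕ) :
    ∀ p ∈ S ^ m, ∃ e ≤ d * m, p.IsHomogeneous e := by
  induction m with
  | zero =>
    rintro p rfl
    exact ⟨0, le_rfl, isHomogeneous_one σ R⟩
  | succ m ih =>
    rintro _ ⟨p, hp, q, hq, rfl⟩
    obtain ⟨e, he, hpe⟩ := ih p hp
    obtain ⟨e', he', hqe'⟩ := hS q hq
    exact ⟨e + e', by rw [Nat.mul_succ]; omega, hpe.mul hqe'⟩

theorem mem_span_mul_isHomogeneous_of_mem_span {T : Set (MvPolynomial σ R)} {N : ℕ}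
    (hT : ∀ p ∈ T, ∃ e ≤ N, p.IsHomogeneous e) {f : MvPolynomial σ R}
    (hf : f ∈ Ideal.span T) (hfN : f.IsHomogeneous N) :
    f ∈ Submodule.span R {g | ∃ p ∈ T, ∃ e ≤ N, ∃ q, p.IsHomogeneous e ∧
      q.IsHomogeneous (N - e) ∧ p * q = g} := by
  obtain ⟨c, hc, rfl⟩ := Submodule.mem_span_set.mp hf
  rw [← homogeneousComponent_eq_self hfN, Finsupp.sum, map_sum]
  refine Submodule.sum_mem _ fun p hp ↦ Submodule.subset_span ?_
  obtain ⟨e, he, hpe⟩ := hT p (hc hp)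
  refine ⟨p, hc hp, e, he, homogeneousComponent (N - e) (c p), hpe,
    homogeneousComponent_isHomogeneous _ _, ?_⟩
  rw [smul_eq_mul, homogeneousComponent_mul_of_isHomogeneous _ hpe he, mul_comm]

end MvPolynomial

section IdealComponent

variable {n : ℕ}

theorem mem_idealComponent {I : Ideal (MvPolynomial (Fin (n + 1)) ℂ)} {s : ℕ}
    {f : MvPolynomial (Fin (n + 1)) ℂ} :
    f ∈ idealComponent I s ↔ f ∈ I ∧ f.IsHomogeneous s :=
  Iff.rfl

theorem idealComponent_top_zero :
    idealComponent (⊤ : Ideal (MvPolynomial (Fin (n + 1)) ℂ)) 0 = 1 := by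
  simp [idealComponent]

theorem idealComponent_mul_le (I J : Ideal (MvPolynomial (Fin (n + 1)) ℂ)) (s t : ℕ) :
    idealComponent I s * idealComponent J t ≤ idealComponent (I * J) (s + t) :=
  Submodule.mul_le.mpr fun _ hx _ hy ↦ ⟨Ideal.mul_mem_mul hx.1 hy.1, hx.2.mul hy.2⟩

theorem span_singleton_mul_homogeneousSubmodule_le {I : Ideal (MvPolynomial (Fin (n + 1)) ℂ)}
    {p : MvPolynomial (Fin (n + 1)) ℂ} {e s : ℕ} (hp : p ∈ I) (hpe : p.IsHomogeneous e)
    (hes : e ≤ s) :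
    Submodule.span ℂ {p} * homogeneousSubmodule (Fin (n + 1)) ℂ (s - e) ≤ idealComponent I s := by
  intro x hx
  obtain ⟨q, hq, rfl⟩ := Submodule.mem_span_singleton_mul.mp hx
  exact ⟨I.mul_mem_right q hp, by simpa [hes] using hpe.mul hq⟩

variable {d : ℕ} {S : Set (MvPolynomial (Fin (n + 1)) ℂ)}

theorem idealComponent_span_pow_add_le_mul (hS : ∀ f ∈ S, ∃ e ≤ d, f.IsHomogeneous e)
    {a a' b b' : ℕ} (hb : d * a ≤ b) (hb' : d * a' ≤ b') :
    idealComponent (Ideal.span S ^ (a + a')) (b + b') ≤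
      idealComponent (Ideal.span S ^ a) b * idealComponent (Ideal.span S ^ a') b' := by
  intro f hf
  obtain ⟨hf, hfN⟩ := mem_idealComponent.mp hf
  rw [Ideal.span, Submodule.span_pow] at hf
  have hdeg := exists_isHomogeneous_of_mem_pow hS
  refine Submodule.span_le.mpr ?_ (mem_span_mul_isHomogeneous_of_mem_span
    (fun p hp ↦ (hdeg _ p hp).imp fun _ he ↦ ⟨he.1.trans (by rw [Nat.mul_add]; omega), he.2⟩)
    hf hfN)
  rintro _ ⟨p, hp, e, -, q, hpe, hq, rfl⟩
  rw [pow_add] at hp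
  obtain ⟨p₁, hp₁, p₂, hp₂, rfl⟩ := hp
  obtain ⟨e₁, he₁, hp₁e₁⟩ := hdeg a p₁ hp₁
  obtain ⟨e₂, he₂, hp₂e₂⟩ := hdeg a' p₂ hp₂
  rcases eq_or_ne (p₁ * p₂) 0 with h0 | h0
  · simp [h0]
  have he : e = e₁ + e₂ := hpe.inj_right (hp₁e₁.mul hp₂e₂) h0
  have hq' : q ∈ homogeneousSubmodule _ ℂ (b - e₁) * homogeneousSubmodule _ ℂ (b' - e₂) := by
    rwa [← homogeneousSubmodule_add, show b - e₁ + (b' - e₂) = b + b' - e by omega]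
  have hmem := Submodule.mul_mem_mul (Submodule.mul_mem_mul
    (Submodule.mem_span_singleton_self p₁) (Submodule.mem_span_singleton_self p₂)) hq'
  rw [mul_mul_mul_comm] at hmem
  have hspan (m : ℕ) : S ^ m ⊆ (Ideal.span S ^ m : Ideal _) :=
    (Set.pow_subset_pow_left Submodule.subset_span).trans (Submodule.pow_subset_pow _)
  exact mul_le_mul'
    (span_singleton_mul_homogeneousSubmodule_le (hspan a hp₁) hp₁e₁ (by omega))
    (span_singleton_mul_homogeneousSubmodule_le (hspan a' hp₂) hp₂e₂ (by omega)) hmem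

theorem idealComponent_span_pow_mul (hS : ∀ f ∈ S, ∃ e ≤ d, f.IsHomogeneous e)
    {a a' b b' : ℕ} (hb : d * a ≤ b) (hb' : d * a' ≤ b') :
    idealComponent (Ideal.span S ^ a) b * idealComponent (Ideal.span S ^ a') b' =
      idealComponent (Ideal.span S ^ (a + a')) (b + b') :=
  le_antisymm (pow_add (Ideal.span S) a a' ▸ idealComponent_mul_le _ _ b b')
    (idealComponent_span_pow_add_le_mul hS hb hb')

end IdealComponent

theorem ideal_component_power_general (n d : ℕ) (I : Ideal (MvPolynomial (Fin (n + 1)) ℂ))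
    (hI : ∃ S : Set (MvPolynomial (Fin (n + 1)) ℂ),
      (∀ f ∈ S, ∃ e ≤ d, f.IsHomogeneous e) ∧ I = Ideal.span S)
    (a b c : ℕ) (hb : d * a ≤ b) :
    (idealComponent (I ^ a) b) ^ c = idealComponent (I ^ (a * c)) (b * c) := by
  obtain ⟨S, hS, rfl⟩ := hI
  induction c with
  | zero => rw [pow_zero, mul_zero, mul_zero, pow_zero, Ideal.one_eq_top, idealComponent_top_zero]
  | succ c ih =>
    have hbc : d * (a * c) ≤ b * c := by rw [← mul_assoc]; exact Nat.mul_le_mul_right c hb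
    rw [pow_succ, ih, idealComponent_span_pow_mul hS hbc hb, mul_add_one, mul_add_one]

/-- If `I ⊆ ℂ[x₀,…,xₙ]` is a homogeneous ideal generated by homogeneous
polynomials of degree at most `d`, then for all integers `a ≥ 1`, `b ≥ d·a`, `c ≥ 1`:
`((I^a)_b)^c = (I^(a·c))_(b·c)`. -/
theorem ideal_component_power (n d : ℕ) (I : Ideal (MvPolynomial (Fin (n + 1)) ℂ))
    (hI : ∃ S : Set (MvPolynomial (Fin (n + 1)) ℂ),
      (∀ f ∈ S, ∃ e ≤ d, f.IsHomogeneous e) ∧ I = Ideal.span S)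
    (a b c : ℕ) (ha : 1 ≤ a) (hb : d * a ≤ b) (hc : 1 ≤ c) :
    (idealComponent (I ^ a) b) ^ c = idealComponent (I ^ (a * c)) (b * c) :=
  ideal_component_power_general n d I hI a b c hb
end

section
/- Let I ⊆ ℂ[x₀,…,xₙ] be a nonzero ideal generated by monomials in x₀,…,xₙ, and let m(I) := {(a₀,…,aₙ) ∈ ℤ_{≥0}^{n+1} : x₀^{a₀}·x₁^{a₁}⋯xₙ^{aₙ} ∈ I} be its set of exponent vectors. Let v be the ℤⁿ-valued valuation on ℂ[x₁,…,xₙ] assigning to each nonzero polynomial P the lexicographically smallest exponent vector among the monomials appearing in P with nonzero coefficient, and let Δ(I) ⊆ ℝ^{n+1} be the Newton–Okounkov body of I constructed from v. Then Δ(I) equals the convex hull of m(I) in ℝ^{n+1}, i.e. the (unbounded) Newton polytope of I. -/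
open MvPolynomial

/-- The lexicographic linear order on `ℤⁿ`. -/
noncomputable instance lexPiIntLinearOrder (n : ℕ) : LinearOrder (Lex (Fin n → ℤ)) :=
  @Pi.Lex.linearOrder (Fin n) (fun _ => ℤ) Fin.instLinearOrder
    (inferInstanceAs (WellFoundedLT (Fin n))) inferInstance

/-- The valuation on `ℂ[x₁,…,xₙ]` assigning to a nonzero polynomial the lexicographically
smallest exponent vector among its monomials (and `0` to the zero polynomial). -/
noncomputable def vLexMin (n : ℕ) (P : MvPolynomial (Fin n) ℂ) : Fin n → ℤ :=
  if h : P = 0 then 0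
  else
    ofLex ((P.support.image fun m => toLex fun i => (m i : ℤ)).min'
      (Finset.image_nonempty.2 (MvPolynomial.support_nonempty.2 h)))

/-- Setting `x₀ = 1`: the dehomogenization map `ℂ[x₀,…,xₙ] → ℂ[x₁,…,xₙ]`. -/
noncomputable def dehom (n : ℕ) : MvPolynomial (Fin (n + 1)) ℂ →ₐ[ℂ] MvPolynomial (Fin n) ℂ :=
  aeval (Fin.cases 1 X)

/-- The smallest closed convex cone containing a subset `U` of a real vector space. -/
def closedConvexConeHull {E : Type*} [AddCommGroup E] [Module ℝ E] [TopologicalSpace E]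
    (U : Set E) : Set E :=
  ⋂₀ {C : Set E | U ⊆ C ∧ IsClosed C ∧ Convex ℝ C ∧ ∀ c : ℝ, 0 ≤ c → ∀ x ∈ C, c • x ∈ C}

/-- The graded semigroup `U_I ⊆ ℝⁿ × ℝ²` of a homogeneous ideal `I ⊆ ℂ[x₀,…,xₙ]` with
respect to a `ℤⁿ`-valued function `w` on `ℂ[x₁,…,xₙ]`. -/
def gradedSemigroup {n : ℕ} (w : MvPolynomial (Fin n) ℂ → (Fin n → ℤ))
    (I : Ideal (MvPolynomial (Fin (n + 1)) ℂ)) : Set ((Fin n → ℝ) × ℝ × ℝ) :=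
  {p | ∃ s t : ℕ, ∃ α ∈ w ''
      ((⇑(dehom n) '' ((idealComponent (I ^ t) s : Set (MvPolynomial (Fin (n + 1)) ℂ)))) \ {0}),
    p = (fun i => (α i : ℝ), (s : ℝ), (t : ℝ))}

/-- `underlineΔ(I) = Σ(U_I) ∩ {t = 1} ⊆ ℝⁿ × ℝ`. -/
def underlineDelta {n : ℕ} (w : MvPolynomial (Fin n) ℂ → (Fin n → ℤ))
    (I : Ideal (MvPolynomial (Fin (n + 1)) ℂ)) : Set ((Fin n → ℝ) × ℝ) :=
  {p | (p.1, p.2, (1 : ℝ)) ∈ closedConvexConeHull (gradedSemigroup w I)}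

/-- The shear isomorphism `τ((a₁,…,aₙ),s) = (s − (a₁+⋯+aₙ), a₁,…,aₙ)`. -/
def tauMap (n : ℕ) : (Fin n → ℝ) × ℝ → (Fin (n + 1) → ℝ) :=
  fun p => Fin.cons (p.2 - ∑ i, p.1 i) p.1

/-- The Newton–Okounkov body `Δ(I) ⊆ ℝ^(n+1)` of a homogeneous ideal `I ⊆ ℂ[x₀,…,xₙ]`. -/
def NObody {n : ℕ} (w : MvPolynomial (Fin n) ℂ → (Fin n → ℤ))
    (I : Ideal (MvPolynomial (Fin (n + 1)) ℂ)) : Set (Fin (n + 1) → ℝ) :=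
  tauMap n '' underlineDelta w I

/-!
Each monomial `x^a ∈ I` puts `(a₁, …, aₙ, |a|, 1)` into `U_I`, and `τ` sends this point back to
`a`; since `Δ(I)` is convex, it contains the convex hull of `m(I)`.

Conversely, `m(I)` is an upper set, so its convex hull `K` is an upper set of `ℝ^(n+1)`, and by
Dickson's lemma `m(I)` is the upper closure of a finite set `G`. With `H = conv G`, every exponent
of an element of `I^t` dominates a sum of `t` generators, hence lies in `t • H + ℝ≥0^(n+1)`. The
valuation of the dehomogenization of `P ∈ (I^t)_s` is one of the exponents of `P`, so after
applying `τ`, `U_I` lies in the cone `{(x, t) | t ≥ 0, x ∈ t • H + ℝ≥0^(n+1)}`. As `H` is compact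
this cone is closed, so it contains `Σ(U_I)`, and its slice at `t = 1` is `H + ℝ≥0^(n+1) ⊆ K`.
-/

open Pointwise

section ClosedConvexConeHull

variable {E : Type*} [AddCommGroup E] [Module ℝ E] [TopologicalSpace E] {U C : Set E}

lemma subset_closedConvexConeHull : U ⊆ closedConvexConeHull U :=
  fun _ hx => Set.mem_sInter.2 fun _ hC => hC.1 hx

lemma closedConvexConeHull_subset (hUC : U ⊆ C) (hC : IsClosed C) (hCconv : Convex ℝ C)
    (hCcone : ∀ c : ℝ, 0 ≤ c → ∀ x ∈ C, c • x ∈ C) : closedConvexConeHull U ⊆ C :=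
  Set.sInter_subset_of_mem ⟨hUC, hC, hCconv, hCcone⟩

lemma convex_closedConvexConeHull (U : Set E) : Convex ℝ (closedConvexConeHull U) :=
  convex_sInter fun _ hC => hC.2.2.1

end ClosedConvexConeHull

section UpperClosureCone

variable {E : Type*} [AddCommGroup E] [Module ℝ E] [PartialOrder E] {H : Set E}

def upperClosureCone (H : Set E) : Set (E × ℝ) :=
  {p | 0 ≤ p.2 ∧ p.1 ∈ upperClosure (p.2 • H)}

lemma smul_mem_upperClosureCone [PosSMulMono ℝ E] {c : ℝ} (hc : 0 ≤ c) {p : E × ℝ}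
    (hp : p ∈ upperClosureCone H) : c • p ∈ upperClosureCone H := by
  obtain ⟨ht, y, hy, hyx⟩ := hp
  refine ⟨mul_nonneg hc ht, c • y, ?_, smul_le_smul_of_nonneg_left hyx hc⟩
  simpa only [Prod.smul_snd, smul_eq_mul, ← smul_smul] using Set.smul_mem_smul_set hy

lemma convex_upperClosureCone [IsOrderedAddMonoid E] [PosSMulMono ℝ E] (hH : Convex ℝ H) :
    Convex ℝ (upperClosureCone H) := by
  rintro p ⟨hp, y, hy, hyp⟩ q ⟨hq, z, hz, hzq⟩ a b ha hb -
  refine ⟨by simp only [Prod.snd_add, Prod.smul_snd, smul_eq_mul]; positivity,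
    a • y + b • z, ?_, add_le_add (smul_le_smul_of_nonneg_left hyp ha)
      (smul_le_smul_of_nonneg_left hzq hb)⟩
  rw [Prod.snd_add, Prod.smul_snd, Prod.smul_snd, smul_eq_mul, smul_eq_mul,
    hH.add_smul (mul_nonneg ha hp) (mul_nonneg hb hq), ← smul_smul, ← smul_smul]
  exact Set.add_mem_add (Set.smul_mem_smul_set hy) (Set.smul_mem_smul_set hz)

lemma isClosed_upperClosureCone [TopologicalSpace E] [OrderClosedTopology E]
    [ContinuousSMul ℝ E] (hH : IsCompact H) : IsClosed (upperClosureCone H) := by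
  have : CompactSpace H := isCompact_iff_compactSpace.mp hH
  -- a projection of a closed subset of `(E × ℝ) × H` along the compact factor `H`
  have hT : IsClosed ({q : (E × ℝ) × H | 0 ≤ q.1.2} ∩ {q | q.1.2 • (q.2 : E) ≤ q.1.1}) :=
    (isClosed_le continuous_const (by fun_prop)).inter (isClosed_le (by fun_prop) (by fun_prop))
  convert isClosedMap_fst_of_compactSpace _ hT using 1
  ext ⟨x, t⟩
  simp [upperClosureCone, Set.mem_smul_set, and_assoc]

end UpperClosureCone

section NatPoints

variable {ι : Type*} {M : Set (ι → ℕ)}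

lemma add_single_mem_convexHull_natCast [DecidableEq ι] (hM : IsUpperSet M)
    {x : ι → ℝ} (hx : x ∈ convexHull ℝ ((fun a i => (a i : ℝ)) '' M)) (i : ι) {c : ℝ}
    (hc : 0 ≤ c) : x + Pi.single i c ∈ convexHull ℝ ((fun a i => (a i : ℝ)) '' M) := by
  set K := convexHull ℝ ((fun a i => (a i : ℝ)) '' M)
  refine convexHull_min ?_ ((convex_convexHull ℝ _).translate_preimage_left _) hx
  rintro _ ⟨a, ha, rfl⟩
  -- `a + c eᵢ` lies on the segment from `a` to the lattice point `a + N eᵢ ∈ M`, `N ≥ c`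
  obtain ⟨N, hN⟩ := exists_nat_gt c
  have hNpos : (0 : ℝ) < N := hc.trans_lt hN
  have haN : (fun j => ((a + Pi.single i N : ι → ℕ) j : ℝ)) =
      (fun j => (a j : ℝ)) + Pi.single i (N : ℝ) := by
    ext j; by_cases hj : j = i <;> simp [hj]
  have hvertex : (fun j => (a j : ℝ)) + Pi.single i (N : ℝ) ∈ K := by
    rw [← haN]
    exact subset_convexHull ℝ _ (Set.mem_image_of_mem _
      (hM (le_add_of_nonneg_right (Pi.single_nonneg.2 (Nat.zero_le N))) ha))
  have hmem := (convex_convexHull ℝ _).add_smul_mem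
    (subset_convexHull ℝ _ (Set.mem_image_of_mem _ ha)) hvertex
    (t := c / N) ⟨by positivity, (div_le_one hNpos).2 hN.le⟩
  change (fun j => (a j : ℝ)) + Pi.single i c ∈ K
  rwa [← Pi.single_smul, smul_eq_mul, div_mul_cancel₀ _ hNpos.ne'] at hmem

lemma IsUpperSet.convexHull_natCast [Fintype ι] (hM : IsUpperSet M) :
    IsUpperSet (convexHull ℝ ((fun a i => (a i : ℝ)) '' M)) := by
  classical
  intro y x hyx hy
  have hpartial : ∀ s : Finset ι, y + ∑ i ∈ s, Pi.single i ((x - y) i) ∈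
      convexHull ℝ ((fun a i => (a i : ℝ)) '' M) := by
    intro s
    induction s using Finset.induction_on with
    | empty => simpa using hy
    | insert i s hi ih =>
      rw [Finset.sum_insert hi, add_comm (Pi.single _ _), ← add_assoc]
      exact add_single_mem_convexHull_natCast hM ih i (sub_nonneg.2 (hyx i))
  simpa only [Finset.univ_sum_single, add_sub_cancel] using hpartial Finset.univ

end NatPoints

lemma exists_finite_subset_forall_exists_le {α : Type*} [PartialOrder α] [WellQuasiOrderedLE α]
    (M : Set α) : ∃ G ⊆ M, G.Finite ∧ ∀ a ∈ M, ∃ g ∈ G, g ≤ a := by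
  refine ⟨{x | Minimal (· ∈ M) x}, fun _ hx => hx.prop,
    (setOfPred_minimal_antichain _).finite_of_partiallyWellOrderedOn
      (Set.isPWO_of_wellQuasiOrderedLE _), fun a ha => ?_⟩
  obtain ⟨g, hga, hg⟩ := (Set.isPWO_of_wellQuasiOrderedLE M).exists_le_minimal ha
  exact ⟨g, hg, hga⟩

lemma isUpperSet_monomial_mem {σ R : Type*} [Finite σ] [CommSemiring R]
    (I : Ideal (MvPolynomial σ R)) :
    IsUpperSet {a : σ → ℕ | monomial (Finsupp.equivFunOnFinite.symm a) (1 : R) ∈ I} := by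
  intro a b hab ha
  have hle : Finsupp.equivFunOnFinite.symm a ≤ Finsupp.equivFunOnFinite.symm b := fun i => hab i
  have : monomial (Finsupp.equivFunOnFinite.symm b) (1 : R) =
      monomial (Finsupp.equivFunOnFinite.symm b - Finsupp.equivFunOnFinite.symm a) 1 *
        monomial (Finsupp.equivFunOnFinite.symm a) 1 := by
    rw [monomial_mul, one_mul, tsub_add_cancel_of_le hle]
  simpa only [Set.mem_ofPred_eq, this] using I.mul_mem_left _ ha

section MonomialIdeal

variable {σ R : Type*} [CommSemiring R]

lemma span_monomial_pow_le {S : Set (σ →₀ ℕ)} {Z : ℕ → Set (σ →₀ ℕ)} (hZ₀ : 0 ∈ Z 0)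
    (hZ : ∀ t, ∀ a ∈ Z t, ∀ b ∈ S, a + b ∈ Z (t + 1)) (t : ℕ) :
    Ideal.span ((fun s => monomial s (1 : R)) '' S) ^ t ≤
      Ideal.span ((fun s => monomial s (1 : R)) '' Z t) := by
  induction t with
  | zero =>
    rw [pow_zero, Ideal.one_eq_top, top_le_iff, Ideal.eq_top_iff_one]
    exact Ideal.subset_span ⟨0, hZ₀, rfl⟩
  | succ t ih =>
    rw [pow_succ]
    refine (Ideal.mul_mono_left ih).trans ?_
    rw [Ideal.span_mul_span', Ideal.span_le]
    rintro _ ⟨_, ⟨a, ha, rfl⟩, _, ⟨b, hb, rfl⟩, rfl⟩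
    exact Ideal.subset_span ⟨a + b, hZ t a ha b hb, by simp [monomial_mul]⟩

lemma natCast_mem_upperClosure_smul_of_mem_pow {S : Set (σ →₀ ℕ)} {H : Set (σ → ℝ)}
    (hH : Convex ℝ H) (hHne : H.Nonempty) (hS : ∀ b ∈ S, (fun i => (b i : ℝ)) ∈ upperClosure H)
    {t : ℕ} {P : MvPolynomial σ R} (hP : P ∈ Ideal.span ((fun s => monomial s (1 : R)) '' S) ^ t)
    {a : σ →₀ ℕ} (ha : a ∈ P.support) :
    (fun i => (a i : ℝ)) ∈ upperClosure ((t : ℝ) • H) := by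
  let Z (t : ℕ) : Set (σ →₀ ℕ) := {z | (fun i => (z i : ℝ)) ∈ upperClosure ((t : ℝ) • H)}
  have hZ₀ : 0 ∈ Z 0 := by
    obtain ⟨h, hh⟩ := hHne
    exact ⟨(0 : ℝ) • h, by simpa using Set.smul_mem_smul_set (a := (0 : ℝ)) hh,
      by simp [Pi.le_def]⟩
  have hZ : ∀ t, ∀ z ∈ Z t, ∀ b ∈ S, z + b ∈ Z (t + 1) := by
    rintro t z ⟨y, hy, hyz⟩ b hb
    obtain ⟨h, hh, hhb⟩ := hS b hb
    refine ⟨y + h, ?_, fun i => by simpa using add_le_add (hyz i) (hhb i)⟩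
    rw [Nat.cast_succ, hH.add_smul t.cast_nonneg zero_le_one, one_smul]
    exact Set.add_mem_add hy hh
  obtain ⟨z, hz, hza⟩ := mem_ideal_span_monomial_image.1 (span_monomial_pow_le hZ₀ hZ t hP) a ha
  exact (upperClosure _).upper (fun i => by simpa using hza i) hz

end MonomialIdeal

section Dehomogenization

variable {n : ℕ}

lemma dehom_monomial (d : Fin (n + 1) →₀ ℕ) (c : ℂ) :
    dehom n (monomial d c) = monomial d.tail c := by
  rw [dehom, aeval_monomial, monomial_eq, Finsupp.prod_pow, Finsupp.prod_pow, Fin.prod_univ_succ]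
  simp [algebraMap_eq, Finsupp.tail_apply]

lemma support_dehom_subset (P : MvPolynomial (Fin (n + 1)) ℂ) :
    (dehom n P).support ⊆ P.support.image Finsupp.tail := by
  classical
  conv_lhs => rw [P.as_sum, map_sum]
  refine support_sum.trans (Finset.biUnion_subset.2 fun a ha => ?_)
  rw [dehom_monomial]
  exact support_monomial_subset.trans
    (Finset.singleton_subset_iff.2 (Finset.mem_image_of_mem _ ha))

lemma vLexMin_mem_support {Q : MvPolynomial (Fin n) ℂ} (hQ : Q ≠ 0) :
    ∃ m ∈ Q.support, vLexMin n Q = fun i => (m i : ℤ) := by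
  rw [vLexMin, dif_neg hQ]
  obtain ⟨m, hm, heq⟩ := Finset.mem_image.1
    (Finset.min'_mem (Q.support.image fun m => toLex fun i => (m i : ℤ)) _)
  exact ⟨m, hm, by rw [← heq]; rfl⟩

lemma vLexMin_monomial (m : Fin n →₀ ℕ) {c : ℂ} (hc : c ≠ 0) :
    vLexMin n (monomial m c) = fun i => (m i : ℤ) := by
  obtain ⟨m', hm', heq⟩ := vLexMin_mem_support (monomial_eq_zero.not.2 hc)
  rwa [Finset.mem_singleton.1 (support_monomial_subset hm')] at heq

end Dehomogenization

section GradedSemigroup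

variable {n : ℕ}

def tauLinearMap (n : ℕ) : ((Fin n → ℝ) × ℝ) →ₗ[ℝ] (Fin (n + 1) → ℝ) where
  toFun := tauMap n
  map_add' p q := by
    ext i
    cases i using Fin.cases <;> simp [tauMap, Finset.sum_add_distrib]
    ring
  map_smul' c p := by
    ext i
    cases i using Fin.cases <;> simp [tauMap, Finset.mul_sum, mul_sub]

lemma tauMap_natCast (a : Fin (n + 1) → ℕ) :
    tauMap n (fun j => (a j.succ : ℝ), ∑ i, (a i : ℝ)) = fun i => (a i : ℝ) := by
  ext i
  cases i using Fin.cases <;> simp [tauMap, Fin.sum_univ_succ]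

lemma mem_gradedSemigroup_of_monomial_mem {I : Ideal (MvPolynomial (Fin (n + 1)) ℂ)}
    {a : Fin (n + 1) → ℕ} (ha : monomial (Finsupp.equivFunOnFinite.symm a) (1 : ℂ) ∈ I) :
    ((fun j => (a j.succ : ℝ)), ∑ i, (a i : ℝ), (1 : ℝ)) ∈ gradedSemigroup (vLexMin n) I := by
  set d := Finsupp.equivFunOnFinite.symm a
  refine ⟨d.degree, 1, _, ⟨_, ⟨⟨monomial d 1, ⟨by simpa using ha, isHomogeneous_monomial _ rfl⟩,
    dehom_monomial d 1⟩, by simp⟩, rfl⟩, ?_⟩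
  rw [vLexMin_monomial _ one_ne_zero, Finsupp.degree_eq_sum]
  simp [d, Finsupp.tail_apply]

lemma exists_of_mem_gradedSemigroup {I : Ideal (MvPolynomial (Fin (n + 1)) ℂ)}
    {q : (Fin n → ℝ) × ℝ × ℝ} (hq : q ∈ gradedSemigroup (vLexMin n) I) :
    ∃ t : ℕ, ∃ P ∈ I ^ t, ∃ a ∈ P.support,
      q = ((fun j => (a j.succ : ℝ)), ∑ i, (a i : ℝ), (t : ℝ)) := by
  obtain ⟨s, t, _, ⟨_, ⟨⟨P, ⟨hPI, hPs⟩, rfl⟩, hP0⟩, rfl⟩, rfl⟩ := hq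
  obtain ⟨m, hm, hv⟩ := vLexMin_mem_support hP0
  obtain ⟨a, ha, rfl⟩ := Finset.mem_image.1 (support_dehom_subset P hm)
  have hdeg : ∑ i, a i = s := by
    rw [← Finsupp.degree_eq_sum, Finsupp.degree_eq_weight_one]
    exact hPs (mem_support_iff.1 ha)
  refine ⟨t, P, hPI, a, ha, ?_⟩
  rw [hv, ← hdeg]
  simp [Finsupp.tail_apply]

lemma convex_underlineDelta (w : MvPolynomial (Fin n) ℂ → (Fin n → ℤ))
    (I : Ideal (MvPolynomial (Fin (n + 1)) ℂ)) : Convex ℝ (underlineDelta w I) := by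
  intro p hp q hq a b ha hb hab
  have := convex_closedConvexConeHull _ hp hq ha hb hab
  simpa [underlineDelta, hab] using this

end GradedSemigroup

lemma convexHull_subset_NObody {n : ℕ} (I : Ideal (MvPolynomial (Fin (n + 1)) ℂ)) :
    convexHull ℝ ((fun (a : Fin (n + 1) → ℕ) => fun i => (a i : ℝ)) ''
      {a | monomial (Finsupp.equivFunOnFinite.symm a) (1 : ℂ) ∈ I}) ⊆ NObody (vLexMin n) I := by
  refine convexHull_min ?_ ((convex_underlineDelta _ I).linear_image (tauLinearMap n))
  rintro _ ⟨a, ha, rfl⟩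
  exact ⟨_, subset_closedConvexConeHull (mem_gradedSemigroup_of_monomial_mem ha), tauMap_natCast a⟩

lemma NObody_subset_convexHull {n : ℕ} {S : Set (Fin (n + 1) →₀ ℕ)} (hS : S.Nonempty) :
    NObody (vLexMin n) (Ideal.span ((fun m => monomial m (1 : ℂ)) '' S)) ⊆
      convexHull ℝ ((fun (a : Fin (n + 1) → ℕ) => fun i => (a i : ℝ)) ''
        {a | monomial (Finsupp.equivFunOnFinite.symm a) (1 : ℂ) ∈
          Ideal.span ((fun m => monomial m (1 : ℂ)) '' S)}) := by
  set I := Ideal.span ((fun m => monomial m (1 : ℂ)) '' S)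
  set M := {a : Fin (n + 1) → ℕ | monomial (Finsupp.equivFunOnFinite.symm a) (1 : ℂ) ∈ I}
  obtain ⟨G, hGM, hGfin, hG⟩ := exists_finite_subset_forall_exists_le M
  set H := convexHull ℝ ((fun (a : Fin (n + 1) → ℕ) => fun i => (a i : ℝ)) '' G)
  have hSH : ∀ b ∈ S, (fun i => (b i : ℝ)) ∈ upperClosure H := by
    intro b hb
    have hbI : monomial b (1 : ℂ) ∈ I := Ideal.subset_span ⟨b, hb, rfl⟩
    obtain ⟨g, hg, hgb⟩ := hG b (by simpa [M] using hbI)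
    exact mem_upperClosure.2
      ⟨_, subset_convexHull ℝ _ (Set.mem_image_of_mem _ hg), fun i => by simpa using hgb i⟩
  have hHne : H.Nonempty := by
    obtain ⟨b, hb⟩ := hS
    obtain ⟨h, hh, -⟩ := hSH b hb
    exact ⟨h, hh⟩
  let Φ : (Fin n → ℝ) × ℝ × ℝ →ₗ[ℝ] (Fin (n + 1) → ℝ) × ℝ :=
    (tauLinearMap n).prodMap LinearMap.id ∘ₗ (LinearEquiv.prodAssoc ℝ _ _ _).symm.toLinearMap
  have hΦ (q : (Fin n → ℝ) × ℝ × ℝ) : Φ q = (tauMap n (q.1, q.2.1), q.2.2) := rfl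
  have hU : gradedSemigroup (vLexMin n) I ⊆ Φ ⁻¹' upperClosureCone H := by
    intro q hq
    obtain ⟨t, P, hP, a, ha, rfl⟩ := exists_of_mem_gradedSemigroup hq
    rw [Set.mem_preimage, hΦ, tauMap_natCast]
    exact ⟨t.cast_nonneg,
      natCast_mem_upperClosure_smul_of_mem_pow (convex_convexHull ℝ _) hHne hSH hP ha⟩
  have hhull := closedConvexConeHull_subset hU
    ((isClosed_upperClosureCone ((hGfin.image _).isCompact_convexHull ℝ)).preimage
      Φ.continuous_of_finiteDimensional)
    ((convex_upperClosureCone (convex_convexHull ℝ _)).linear_preimage Φ)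
    (fun c hc q hq => by simpa using smul_mem_upperClosureCone hc hq)
  rintro _ ⟨p, hp, rfl⟩
  have hτp : tauMap n p ∈ upperClosure H := by simpa [hΦ] using (hhull hp).2
  exact upperClosure_min (convexHull_mono (Set.image_mono hGM))
    (isUpperSet_monomial_mem I).convexHull_natCast hτp

/-- For a nonzero monomial ideal `I ⊆ ℂ[x₀,…,xₙ]` with exponent set
`m(I) = {a ∈ ℤ_{≥0}^(n+1) : x^a ∈ I}`, and the valuation `v` on `ℂ[x₁,…,xₙ]` taking the
lexicographically smallest exponent vector, the Newton–Okounkov body `Δ(I)` equals the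
convex hull of `m(I)` in `ℝ^(n+1)`, i.e. the (unbounded) Newton polytope of `I`. -/
theorem NObody_monomial_ideal (n : ℕ)
    (I : Ideal (MvPolynomial (Fin (n + 1)) ℂ)) (hI0 : I ≠ ⊥)
    (hImonomial : ∃ S : Set (Fin (n + 1) →₀ ℕ),
      I = Ideal.span ((fun m => (monomial m (1 : ℂ) : MvPolynomial (Fin (n + 1)) ℂ)) '' S)) :
    NObody (vLexMin n) I =
      convexHull ℝ
        ((fun (a : Fin (n + 1) → ℕ) => fun i => (a i : ℝ)) ''
          {a : Fin (n + 1) → ℕ |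
            (monomial (Finsupp.equivFunOnFinite.symm a) (1 : ℂ) :
              MvPolynomial (Fin (n + 1)) ℂ) ∈ I}) := by
  obtain ⟨S, rfl⟩ := hImonomial
  have hS : S.Nonempty := Set.nonempty_iff_ne_empty.2 fun h => hI0 (by simp [h])
  exact (NObody_subset_convexHull hS).antisymm (convexHull_subset_NObody _)
end
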